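/- arXiv:2003.05058 — 5 statements merged into one kernel-verified Lean document; each statement's English description precedes it below -/
import Mathlib

section
/- Let $K, t, P, \rho$ be positive integers with $t < K$, $\rho \le P$, and let $\alpha = \rho/P$. Suppose $q_1, \ldots, q_P$ are natural numbers with $0 \le q_p \le K$ and $\sum_{p=1}^P q_p = K\rho$. Then the total delivery latency $T_{sd} = \frac{1}{\rho \binom{K}{t}} \sum_{p=1}^P \left[\binom{K}{t+1} - \binom{K-q_p}{t+1}\right]$ satisfies $T_{sd} \ge \frac{K-t}{t+1}$, with equality when each $q_p \in \{0, K\}$. -/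
/-!
Since `m ↦ C(m, t+1) / m` is nondecreasing, a server serving `q` of the `K` users transmits
at least the fraction `q / K` of `C(K, t+1)`, with equality when `q = 0` or `q = K`.
Summing over servers and using `∑ q_p = Kρ` gives `∑ R_p ≥ C(K, t+1) / C(K, t) = (K - t)/(t + 1)`.
-/

open Finset

namespace Nat

-- `choose m (k + 1) / m = choose (m - 1) k / (k + 1)`, which is monotone in `m`.
theorem mul_choose_succ_le_mul_choose_succ {m n : ℕ} (k : ℕ) (h : m ≤ n) :
    n * m.choose (k + 1) ≤ m * n.choose (k + 1) := by
  cases m with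
  | zero => simp
  | succ m =>
    obtain ⟨n, rfl⟩ : ∃ n', n = n' + 1 := ⟨n - 1, by omega⟩
    refine Nat.le_of_mul_le_mul_right ?_ k.succ_pos
    calc (n + 1) * (m + 1).choose (k + 1) * (k + 1)
        = (n + 1) * ((m + 1) * m.choose k) := by rw [mul_assoc, add_one_mul_choose_eq]
      _ ≤ (m + 1) * ((n + 1) * n.choose k) := by
        rw [mul_left_comm]
        exact Nat.mul_le_mul_left _ (Nat.mul_le_mul_left _ (choose_le_choose k (by omega)))
      _ = (m + 1) * (n + 1).choose (k + 1) * (k + 1) := by rw [add_one_mul_choose_eq]; ring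

theorem cast_choose_succ_div_cast_choose {n k : ℕ} (h : k < n) :
    (n.choose (k + 1) : ℚ) / n.choose k = ((n : ℚ) - k) / (k + 1) := by
  have hpos : (0 : ℚ) < n.choose k := by exact_mod_cast choose_pos h.le
  have hid : (n.choose (k + 1) * (k + 1) : ℚ) = n.choose k * ((n : ℚ) - k) := by
    rw [← Nat.cast_sub h.le]; exact_mod_cast choose_succ_right_eq n k
  rw [div_eq_div_iff hpos.ne' (by positivity)]
  linarith

end Nat

section ServerLoad

variable {K q : ℕ} (k : ℕ)

theorem mul_choose_le_mul_sub_choose (hq : q ≤ K) :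
    (q : ℚ) * K.choose (k + 1) ≤ K * ((K.choose (k + 1) : ℚ) - (K - q).choose (k + 1)) := by
  have h : (K : ℚ) * (K - q).choose (k + 1) ≤ ((K : ℚ) - q) * K.choose (k + 1) := by
    rw [← Nat.cast_sub hq]
    exact_mod_cast Nat.mul_choose_succ_le_mul_choose_succ k (Nat.sub_le K q)
  linarith

theorem mul_choose_eq_mul_sub_choose (hq : q = 0 ∨ q = K) :
    (q : ℚ) * K.choose (k + 1) = K * ((K.choose (k + 1) : ℚ) - (K - q).choose (k + 1)) := by
  rcases hq with rfl | rfl <;> simp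

end ServerLoad

section Servers

variable {ι : Type*} [Fintype ι] {K ρ : ℕ} {q : ι → ℕ} (k : ℕ)

theorem mul_choose_le_sum_sub_choose (hK : 0 < K) (hqK : ∀ p, q p ≤ K)
    (hsum : ∑ p, q p = K * ρ) :
    (ρ : ℚ) * K.choose (k + 1) ≤ ∑ p, ((K.choose (k + 1) : ℚ) - (K - q p).choose (k + 1)) := by
  have hsumQ : (∑ p, (q p : ℚ)) = K * ρ := by exact_mod_cast hsum
  refine le_of_mul_le_mul_left ?_ (by exact_mod_cast hK : (0 : ℚ) < K)
  calc (K : ℚ) * (ρ * K.choose (k + 1)) = ∑ p, (q p : ℚ) * K.choose (k + 1) := by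
        rw [← sum_mul, hsumQ, mul_assoc]
    _ ≤ ∑ p, (K : ℚ) * ((K.choose (k + 1) : ℚ) - (K - q p).choose (k + 1)) :=
        sum_le_sum fun p _ => mul_choose_le_mul_sub_choose k (hqK p)
    _ = _ := (mul_sum ..).symm

theorem sum_sub_choose_eq_mul_choose (hK : 0 < K) (hq : ∀ p, q p = 0 ∨ q p = K)
    (hsum : ∑ p, q p = K * ρ) :
    ∑ p, ((K.choose (k + 1) : ℚ) - (K - q p).choose (k + 1)) = ρ * K.choose (k + 1) := by
  have hsumQ : (∑ p, (q p : ℚ)) = K * ρ := by exact_mod_cast hsum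
  refine mul_left_cancel₀ (by exact_mod_cast hK.ne' : (K : ℚ) ≠ 0) ?_
  calc (K : ℚ) * ∑ p, ((K.choose (k + 1) : ℚ) - (K - q p).choose (k + 1))
      = ∑ p, (q p : ℚ) * K.choose (k + 1) := by
        rw [mul_sum]; exact sum_congr rfl fun p _ => (mul_choose_eq_mul_sub_choose k (hq p)).symm
    _ = K * (ρ * K.choose (k + 1)) := by rw [← sum_mul, hsumQ, mul_assoc]

end Servers

theorem successive_latency_lower_bound_general (K t P ρ : ℕ) (q : Fin P → ℕ)
    (ht : t < K) (hρ : 0 < ρ)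
    (hqK : ∀ p, q p ≤ K) (hsum : ∑ p, q p = K * ρ) :
    (1 / ((ρ : ℚ) * Nat.choose K t)) *
        (∑ p, ((Nat.choose K (t + 1) : ℚ) - Nat.choose (K - q p) (t + 1)))
      ≥ ((K : ℚ) - t) / (t + 1)
    ∧ ((∀ p, q p = 0 ∨ q p = K) →
        (1 / ((ρ : ℚ) * Nat.choose K t)) *
            (∑ p, ((Nat.choose K (t + 1) : ℚ) - Nat.choose (K - q p) (t + 1)))
          = ((K : ℚ) - t) / (t + 1)) := by
  have hK : 0 < K := Nat.zero_lt_of_lt ht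
  have hnorm : 0 < (ρ : ℚ) * K.choose t := by
    have := Nat.choose_pos ht.le
    positivity
  have hbase : 1 / ((ρ : ℚ) * K.choose t) * (ρ * K.choose (t + 1)) = ((K : ℚ) - t) / (t + 1) := by
    rw [← Nat.cast_choose_succ_div_cast_choose ht]
    field_simp
  refine ⟨?_, fun hq => ?_⟩
  · rw [ge_iff_le, ← hbase]
    gcongr
    exact mul_choose_le_sum_sub_choose t hK hqK hsum
  · rw [sum_sub_choose_eq_mul_choose t hK hq hsum, hbase]

theorem successive_latency_lower_bound (K t P ρ : ℕ) (q : Fin P → ℕ)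
    (hK : 0 < K) (ht : t < K) (hρ : 0 < ρ) (hρP : ρ ≤ P)
    (hqK : ∀ p, q p ≤ K) (hsum : ∑ p, q p = K * ρ) :
    (1 / ((ρ : ℚ) * Nat.choose K t)) *
        (∑ p, ((Nat.choose K (t + 1) : ℚ) - Nat.choose (K - q p) (t + 1)))
      ≥ ((K : ℚ) - t) / (t + 1)
    ∧ ((∀ p, q p = 0 ∨ q p = K) →
        (1 / ((ρ : ℚ) * Nat.choose K t)) *
            (∑ p, ((Nat.choose K (t + 1) : ℚ) - Nat.choose (K - q p) (t + 1)))
          = ((K : ℚ) - t) / (t + 1)) :=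
  successive_latency_lower_bound_general K t P ρ q ht hρ hqK hsum
end

section
/- Let $K, t, P, \rho$ be positive integers with $t < K$, $\rho \le P$. Among all vectors $(q_1,\ldots,q_P)$ of natural numbers with $0 \le q_p \le K$ and $\sum_p q_p = K\rho$, the sum $\sum_{p=1}^P \binom{K-q_p}{t+1}$ is minimized by any vector satisfying $\max_p q_p \le \min_p q_p + 1$ (the most balanced allocation). -/
/-!
The function `x ↦ (K - x).choose (t + 1)` is discretely convex on `ℕ` (its forward differences
increase). A balanced vector takes only two adjacent values `m` and `m + 1`, where this function
agrees with its chord `L` through `m` and `m + 1`; by convexity `L` lies below the function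
everywhere. Since `L` is affine and the two vectors have the same sum,
`∑ f (q p) = ∑ L (q p) = ∑ L (q' p) ≤ ∑ f (q' p)`.
-/

theorem Nat.exists_forall_eq_or_eq_add_one_of_le_add_one {ι : Type*} {q : ι → ℕ}
    (hbal : ∀ i j, q i ≤ q j + 1) : ∃ m, ∀ i, q i = m ∨ q i = m + 1 := by
  refine ⟨sInf (Set.range q), fun i => ?_⟩
  obtain ⟨j, hj⟩ := Nat.sInf_mem (⟨q i, i, rfl⟩ : (Set.range q).Nonempty)
  have hle : sInf (Set.range q) ≤ q i := Nat.sInf_le ⟨i, rfl⟩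
  have := hbal i j
  omega

section DiscreteConvex

variable {f : ℕ → ℤ}

theorem add_mul_le_of_monotone_sub (hf : Monotone fun n => f (n + 1) - f n) (m k : ℕ) :
    f m + (f (m + 1) - f m) * k ≤ f (m + k) := by
  induction k with
  | zero => simp
  | succ k ih =>
    have := hf (Nat.le_add_right m k)
    simp only [← add_assoc] at *
    push_cast
    linarith

theorem sub_le_mul_of_monotone_sub (hf : Monotone fun n => f (n + 1) - f n) (x k : ℕ) :
    f (x + k) - f x ≤ k * (f (x + k + 1) - f (x + k)) := by
  induction k with
  | zero => simp
  | succ k ih =>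
    have := hf (Nat.le_succ (x + k))
    simp only [← add_assoc] at *
    push_cast
    nlinarith

theorem add_mul_sub_le_of_monotone_sub (hf : Monotone fun n => f (n + 1) - f n) (m x : ℕ) :
    f m + (f (m + 1) - f m) * ((x : ℤ) - m) ≤ f x := by
  rcases le_total m x with h | h
  · obtain ⟨k, rfl⟩ := Nat.exists_eq_add_of_le h
    have := add_mul_le_of_monotone_sub hf m k
    push_cast
    linarith
  · obtain ⟨k, rfl⟩ := Nat.exists_eq_add_of_le h
    have := sub_le_mul_of_monotone_sub hf x k
    push_cast
    linarith

end DiscreteConvex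

theorem Nat.monotone_choose_tsub_sub_choose_tsub (K r : ℕ) :
    Monotone fun x => ((K - (x + 1)).choose (r + 1) : ℤ) - (K - x).choose (r + 1) := by
  refine monotone_nat_of_le_succ fun x => ?_
  rcases le_or_gt K (x + 1) with hK | hK
  · simp [Nat.sub_eq_zero_of_le hK, Nat.sub_eq_zero_of_le (hK.trans (Nat.le_succ _))]
  · obtain ⟨n, rfl⟩ := Nat.exists_eq_add_of_lt hK
    have h₀ : x + 1 + n + 1 - x = n + 2 := by omega
    have h₁ : x + 1 + n + 1 - (x + 1) = n + 1 := by omega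
    have h₂ : x + 1 + n + 1 - (x + 1 + 1) = n := by omega
    have hmono := Nat.choose_le_choose r (Nat.le_add_right n 1)
    simp only [h₀, h₁, h₂, Nat.choose_succ_succ' (n + 1) r, Nat.choose_succ_succ' n r]
    push_cast
    omega

theorem sum_le_sum_of_monotone_sub_of_le_add_one {ι : Type*} [Fintype ι] {f : ℕ → ℤ}
    (hf : Monotone fun n => f (n + 1) - f n) {q q' : ι → ℕ}
    (hbal : ∀ i j, q i ≤ q j + 1) (hsum : ∑ i, q i = ∑ i, q' i) :
    ∑ i, f (q i) ≤ ∑ i, f (q' i) := by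
  obtain ⟨m, hm⟩ := Nat.exists_forall_eq_or_eq_add_one_of_le_add_one hbal
  set L : ℕ → ℤ := fun x => f m + (f (m + 1) - f m) * ((x : ℤ) - m) with hL
  have hq : ∀ i, f (q i) = L (q i) := fun i => by
    rcases hm i with h | h <;> simp [hL, h]
  have hsum' : ∑ i, (q i : ℤ) = ∑ i, (q' i : ℤ) := by exact_mod_cast hsum
  calc ∑ i, f (q i) = ∑ i, L (q i) := Finset.sum_congr rfl fun i _ => hq i
    _ = ∑ i, L (q' i) := by
      simp only [hL, Finset.sum_add_distrib, ← Finset.mul_sum, Finset.sum_sub_distrib, hsum']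
    _ ≤ ∑ i, f (q' i) := Finset.sum_le_sum fun i _ => add_mul_sub_le_of_monotone_sub hf m (q' i)

theorem balanced_minimizes_choose_sum_general (K t P ρ : ℕ) (q q' : Fin P → ℕ)
    (hsum : ∑ p, q p = K * ρ) (hsum' : ∑ p, q' p = K * ρ)
    (hbal : ∀ p₁ p₂, q p₁ ≤ q p₂ + 1) :
    ∑ p, Nat.choose (K - q p) (t + 1) ≤ ∑ p, Nat.choose (K - q' p) (t + 1) := by
  have := sum_le_sum_of_monotone_sub_of_le_add_one (f := fun x => ((K - x).choose (t + 1) : ℤ))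
    (Nat.monotone_choose_tsub_sub_choose_tsub K t) hbal (hsum.trans hsum'.symm)
  exact_mod_cast this

theorem balanced_minimizes_choose_sum (K t P ρ : ℕ) (hK : 0 < K) (ht : t < K)
    (hρ : 0 < ρ) (hρP : ρ ≤ P) (q q' : Fin P → ℕ)
    (hq : ∀ p, q p ≤ K) (hq' : ∀ p, q' p ≤ K)
    (hsum : ∑ p, q p = K * ρ) (hsum' : ∑ p, q' p = K * ρ)
    (hbal : ∀ p₁ p₂, q p₁ ≤ q p₂ + 1) :
    ∑ p, Nat.choose (K - q p) (t + 1) ≤ ∑ p, Nat.choose (K - q' p) (t + 1) :=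
  balanced_minimizes_choose_sum_general K t P ρ q q' hsum hsum' hbal
end

section
/- Let $K, t, P, \rho$ be positive integers with $t < K$, $\rho \le P$, $\alpha = \rho/P$, and $w_i = \binom{K}{i}\alpha^i(1-\alpha)^{K-i}$. Then $\frac{1}{\alpha}\frac{K-t}{t+1} - \frac{1}{\alpha \binom{K}{t}} \sum_{i=0}^{K} w_i \binom{K-i}{t+1} = \frac{K-t}{t+1} \cdot \frac{1 - (1-\alpha)^{t+1}}{\alpha}$. -/
/-!
Choosing an `i`-set and then a disjoint `s`-set is the same as choosing them in the other order,
so `C(K,i) C(K-i,t+1) = C(K,t+1) C(K-t-1,i)`. This pulls `C(K,t+1) (1-α)^(t+1)` out of the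
weighted sum, leaving the binomial expansion of `(α + (1-α))^(K-t-1) = 1`. The closed form then
follows from `C(K,t+1) / C(K,t) = (K-t)/(t+1)`.
-/

open Finset

theorem Nat.choose_mul_choose_sub_comm (n i s : ℕ) :
    n.choose i * (n - i).choose s = n.choose s * (n - s).choose i := by
  have hi := Nat.choose_mul (n := n) (k := i + s) (s := i) (Nat.le_add_right i s)
  have hs := Nat.choose_mul (n := n) (k := i + s) (s := s) (Nat.le_add_left s i)
  rw [Nat.add_sub_cancel_left] at hi
  rw [Nat.add_sub_cancel] at hs
  rw [← hi, ← hs, Nat.choose_symm_add]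

theorem add_pow_eq_sum_range_of_le {R : Type*} [CommSemiring R] (x y : R) {m n : ℕ}
    (hmn : m ≤ n) :
    (x + y) ^ m = ∑ i ∈ range (n + 1), x ^ i * y ^ (m - i) * m.choose i := by
  rw [add_pow]
  refine sum_subset (range_subset_range.mpr (by omega)) fun i _ hi => ?_
  rw [Nat.choose_eq_zero_of_lt (by simpa using hi), Nat.cast_zero, mul_zero]

theorem sum_range_choose_mul_pow_mul_choose_sub {R : Type*} [CommSemiring R] (x y : R)
    (n s : ℕ) :
    ∑ i ∈ range (n + 1), (n.choose i : R) * x ^ i * y ^ (n - i) * (n - i).choose s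
      = n.choose s * y ^ s * (x + y) ^ (n - s) := by
  have hterm : ∀ i ∈ range (n + 1),
      (n.choose i : R) * x ^ i * y ^ (n - i) * (n - i).choose s
        = n.choose s * y ^ s * (x ^ i * y ^ (n - s - i) * (n - s).choose i) := by
    intro i hi
    have hpow : ((n - i).choose s : R) * y ^ (n - i)
        = (n - i).choose s * (y ^ s * y ^ (n - s - i)) := by
      rcases le_or_gt (i + s) n with hle | hgt
      · rw [← pow_add]; congr 2; omega
      · rw [Nat.choose_eq_zero_of_lt (by simp at hi; omega), Nat.cast_zero, zero_mul, zero_mul]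
    calc (n.choose i : R) * x ^ i * y ^ (n - i) * (n - i).choose s
        = n.choose i * x ^ i * ((n - i).choose s * y ^ (n - i)) := by ring
      _ = (n.choose i * (n - i).choose s : ℕ) * (x ^ i * (y ^ s * y ^ (n - s - i))) := by
        rw [hpow]; push_cast; ring
      _ = n.choose s * y ^ s * (x ^ i * y ^ (n - s - i) * (n - s).choose i) := by
        rw [Nat.choose_mul_choose_sub_comm]; push_cast; ring
  rw [sum_congr rfl hterm, ← mul_sum, ← add_pow_eq_sum_range_of_le x y (Nat.sub_le n s)]

theorem Nat.cast_choose_succ_div_cast_choose_s9 {𝕜 : Type*} [Field 𝕜] [CharZero 𝕜] {n k : ℕ}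
    (hk : k ≤ n) :
    (n.choose (k + 1) : 𝕜) / n.choose k = ((n : 𝕜) - k) / (k + 1) := by
  have hpos : (n.choose k : 𝕜) ≠ 0 := by exact_mod_cast (Nat.choose_pos hk).ne'
  rw [div_eq_div_iff hpos (Nat.cast_add_one_ne_zero k), ← Nat.cast_sub hk,
    mul_comm _ (n.choose k : 𝕜)]
  exact_mod_cast Nat.choose_succ_right_eq n k

theorem average_latency_closed_form_general (K t : ℕ) (ht : t < K) (α : ℝ)
    (w : ℕ → ℝ) (hw : ∀ i, w i = (Nat.choose K i : ℝ) * α ^ i * (1 - α) ^ (K - i)) :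
    (1 / α) * (((K : ℝ) - t) / (t + 1))
      - (1 / (α * Nat.choose K t)) *
          (∑ i ∈ Finset.range (K + 1), w i * Nat.choose (K - i) (t + 1))
    = (((K : ℝ) - t) / (t + 1)) * ((1 - (1 - α) ^ (t + 1)) / α) := by
  have hsum : ∑ i ∈ range (K + 1), w i * Nat.choose (K - i) (t + 1)
      = (Nat.choose K (t + 1) : ℝ) * (1 - α) ^ (t + 1) := by
    simp_rw [hw]
    rw [sum_range_choose_mul_pow_mul_choose_sub, add_sub_cancel, one_pow, mul_one]
  rw [hsum]
  linear_combination (-(α⁻¹ * (1 - α) ^ (t + 1))) *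
    Nat.cast_choose_succ_div_cast_choose_s9 (𝕜 := ℝ) ht.le

theorem average_latency_closed_form (K t P ρ : ℕ) (hK : 0 < K) (ht : t < K)
    (hρ : 0 < ρ) (hρP : ρ ≤ P) (α : ℝ) (hα : α = (ρ : ℝ) / P)
    (w : ℕ → ℝ) (hw : ∀ i, w i = (Nat.choose K i : ℝ) * α ^ i * (1 - α) ^ (K - i)) :
    (1 / α) * (((K : ℝ) - t) / (t + 1))
      - (1 / (α * Nat.choose K t)) *
          (∑ i ∈ Finset.range (K + 1), w i * Nat.choose (K - i) (t + 1))
    = (((K : ℝ) - t) / (t + 1)) * ((1 - (1 - α) ^ (t + 1)) / α) :=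
  average_latency_closed_form_general K t ht α w hw
end

section
/- Consider the linear program: minimize $\sum_{i=0}^{K} c_i x_i$ over nonnegative reals $x_0,\ldots,x_K$ subject to $\sum_{i=0}^K x_i \ge F$ and $\sum_{i=0}^K i\, x_i \le tF$, where $t \in \{0,\ldots,K\}$ is an integer and the coefficients $c_i = \sum_{p=1}^P \frac{\binom{K}{i+1}-\binom{K-q_p}{i+1}}{\rho\binom{K}{i}}$ are such that the sequence $(c_i)$ is nonincreasing and convex in $i$. Then an optimal solution is $x_t = F$, $x_i = 0$ for $i \ne t$, and the optimal value is $\sum_{p=1}^P \frac{\binom{K}{t+1}-\binom{K-q_p}{t+1}}{\rho\binom{K}{t}} \cdot F$. -/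
/-!
A convex sequence lies above the line through `(t, c t)` whose slope `m` is its forward
difference at `t` (or `0` when `t = K`); when `c` is nonincreasing, `m ≤ 0`. Integrating that
line against a feasible `x` gives `∑ c i x i ≥ c t ∑ x i + m (∑ i x i - t ∑ x i)`, and the two
constraints of the program push the right-hand side up to `c t F`: the first because
`c t ≥ 0` (each term of its defining sum is), the second because `m ≤ 0`. This is weak LP
duality with the dual certificate read off the supporting line.
-/

open Finset
open scoped fwdDiff

section SupportingLine

variable {α : Type*} [Field α] [LinearOrder α] [IsStrictOrderedRing α]

lemma fwdDiff_le_fwdDiff_of_convex {c : ℕ → α} {K : ℕ}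
    (hconv : ∀ i, i + 2 ≤ K → c i + c (i + 2) ≥ 2 * c (i + 1)) {j k : ℕ} (hjk : j ≤ k)
    (hk : k < K) : Δ_[1] c j ≤ Δ_[1] c k := by
  induction k, hjk using Nat.le_induction with
  | base => exact le_rfl
  | succ k hjk ih =>
    have := hconv k (by omega)
    simp only [fwdDiff] at ih ⊢
    linarith [ih (by omega)]

lemma add_mul_sub_le_of_fwdDiff {c : ℕ → α} {t K : ℕ} {m : α}
    (hleft : ∀ j < t, Δ_[1] c j ≤ m) (hright : ∀ j, t ≤ j → j < K → m ≤ Δ_[1] c j)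
    {i : ℕ} (hi : i ≤ K) : c t + m * ((i : α) - t) ≤ c i := by
  rcases le_total t i with hti | hit
  · have hsum : (i - t) • m ≤ c i - c t := by
      rw [← sum_Ico_sub c hti, ← Nat.card_Ico]
      exact card_nsmul_le_sum _ _ _ fun j hj ↦
        hright j (mem_Ico.1 hj).1 (by have := (mem_Ico.1 hj).2; omega)
    rw [nsmul_eq_mul, Nat.cast_sub hti] at hsum
    linarith
  · have hsum : c t - c i ≤ (t - i) • m := by
      rw [← sum_Ico_sub c hit, ← Nat.card_Ico]
      exact sum_le_card_nsmul _ _ _ fun j hj ↦ hleft j (mem_Ico.1 hj).2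
    rw [nsmul_eq_mul, Nat.cast_sub hit] at hsum
    linarith

lemma mul_le_sum_mul_of_supporting_line {c x : ℕ → α} {K t : ℕ} {m F : α}
    (hline : ∀ i ≤ K, c t + m * ((i : α) - t) ≤ c i) (hct : 0 ≤ c t) (hm : m ≤ 0)
    (hx : ∀ i, 0 ≤ x i) (hS : F ≤ ∑ i ∈ range (K + 1), x i)
    (hT : ∑ i ∈ range (K + 1), (i : α) * x i ≤ t * F) :
    c t * F ≤ ∑ i ∈ range (K + 1), c i * x i := by
  set S := ∑ i ∈ range (K + 1), x i
  set T := ∑ i ∈ range (K + 1), (i : α) * x i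
  have hdual : 0 ≤ m * (T - t * S) :=
    mul_nonneg_of_nonpos_of_nonpos hm (by nlinarith [(Nat.cast_nonneg t : (0 : α) ≤ t)])
  calc c t * F ≤ c t * S + m * (T - t * S) := by nlinarith
    _ = ∑ i ∈ range (K + 1), (c t + m * ((i : α) - t)) * x i := by
      simp only [S, T, mul_sub, mul_sum, ← sum_add_distrib, ← sum_sub_distrib]
      exact sum_congr rfl fun i _ ↦ by ring
    _ ≤ ∑ i ∈ range (K + 1), c i * x i :=
      sum_le_sum fun i hi ↦
        mul_le_mul_of_nonneg_right (hline i (Nat.lt_succ_iff.1 (mem_range.1 hi))) (hx i)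

end SupportingLine

lemma choose_sub_choose_div_nonneg (K n i ρ : ℕ) (hn : n ≤ K) :
    0 ≤ ((K.choose (i + 1) : ℚ) - n.choose (i + 1)) / (ρ * K.choose i) :=
  div_nonneg (sub_nonneg.2 (by exact_mod_cast Nat.choose_le_choose _ hn)) (by positivity)

theorem lower_bound_linear_program_general (K t P ρ : ℕ) (ht : t ≤ K)
    (q : Fin P → ℕ)
    (F : ℚ) (c : ℕ → ℚ)
    (hc : ∀ i, c i = ∑ p, ((Nat.choose K (i + 1) : ℚ) - Nat.choose (K - q p) (i + 1))
        / ((ρ : ℚ) * Nat.choose K i))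
    (hmono : ∀ i, i < K → c (i + 1) ≤ c i)
    (hconv : ∀ i, i + 2 ≤ K → c i + c (i + 2) ≥ 2 * c (i + 1)) :
    (∀ x : ℕ → ℚ, (∀ i, 0 ≤ x i) →
        F ≤ ∑ i ∈ Finset.range (K + 1), x i →
        ∑ i ∈ Finset.range (K + 1), (i : ℚ) * x i ≤ (t : ℚ) * F →
        c t * F ≤ ∑ i ∈ Finset.range (K + 1), c i * x i)
    ∧ c t * F = (∑ p, ((Nat.choose K (t + 1) : ℚ) - Nat.choose (K - q p) (t + 1))
        / ((ρ : ℚ) * Nat.choose K t)) * F := by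
  refine ⟨fun x hx hS hT ↦ ?_, by rw [hc t]⟩
  have hct : 0 ≤ c t :=
    hc t ▸ sum_nonneg fun p _ ↦ choose_sub_choose_div_nonneg _ _ _ _ (K.sub_le _)
  have hslope_nonpos : ∀ j < K, Δ_[1] c j ≤ 0 := fun j hj ↦ sub_nonpos.2 (hmono j hj)
  obtain ⟨m, hm, hline⟩ : ∃ m ≤ 0, ∀ i ≤ K, c t + m * ((i : ℚ) - t) ≤ c i := by
    rcases ht.lt_or_eq with htK | rfl
    · exact ⟨Δ_[1] c t, hslope_nonpos t htK, fun i ↦ add_mul_sub_le_of_fwdDiff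
        (fun j hj ↦ fwdDiff_le_fwdDiff_of_convex hconv hj.le htK)
        (fun j htj hj ↦ fwdDiff_le_fwdDiff_of_convex hconv htj hj)⟩
    · exact ⟨0, le_rfl, fun i ↦ add_mul_sub_le_of_fwdDiff hslope_nonpos
        (fun j htj hj ↦ absurd hj htj.not_gt)⟩
  exact mul_le_sum_mul_of_supporting_line hline hct hm hx hS hT

theorem lower_bound_linear_program (K t P ρ : ℕ) (ht : t ≤ K) (hρ : 0 < ρ)
    (hρP : ρ ≤ P) (q : Fin P → ℕ) (hq : ∀ p, q p ≤ K)
    (F : ℚ) (hF : 0 < F) (c : ℕ → ℚ)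
    (hc : ∀ i, c i = ∑ p, ((Nat.choose K (i + 1) : ℚ) - Nat.choose (K - q p) (i + 1))
        / ((ρ : ℚ) * Nat.choose K i))
    (hmono : ∀ i, i < K → c (i + 1) ≤ c i)
    (hconv : ∀ i, i + 2 ≤ K → c i + c (i + 2) ≥ 2 * c (i + 1)) :
    (∀ x : ℕ → ℚ, (∀ i, 0 ≤ x i) →
        F ≤ ∑ i ∈ Finset.range (K + 1), x i →
        ∑ i ∈ Finset.range (K + 1), (i : ℚ) * x i ≤ (t : ℚ) * F →
        c t * F ≤ ∑ i ∈ Finset.range (K + 1), c i * x i)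
    ∧ c t * F = (∑ p, ((Nat.choose K (t + 1) : ℚ) - Nat.choose (K - q p) (t + 1))
        / ((ρ : ℚ) * Nat.choose K t)) * F :=
  lower_bound_linear_program_general K t P ρ ht q F c hc hmono hconv
end

section
/- Let $K, t$ be natural numbers with $t+1 \le K$ and $0 \le q \le K$. Then $\frac{\binom{K}{t+1} - \binom{K-q}{t+1}}{\binom{K}{t}}$ is nonincreasing in $t$ (for fixed $K, q$) and nondecreasing in $q$ (for fixed $K, t$). -/
/-!
The numerator telescopes by Pascal's rule:
`C(K, t+1) - C(K-q, t+1) = ∑_{K-q ≤ j < K} C(j, t)`. Monotonicity in `q` is then just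
`C(K-q-1, t+1) ≤ C(K-q, t+1)`, while monotonicity in `t` follows termwise from
`C(j, t+1) / C(K, t+1) ≤ C(j, t) / C(K, t)` for `j ≤ K`, which holds because
`C(n, t+1) / C(n, t) = (n - t) / (t + 1)` is nondecreasing in `n`.
-/

open Finset

theorem choose_succ_sub_choose_succ_eq_sum_Ico {R : Type*} [CommRing R] (t : ℕ) {m K : ℕ}
    (h : m ≤ K) :
    (K.choose (t + 1) : R) - m.choose (t + 1) = ∑ j ∈ Ico m K, (j.choose t : R) := by
  induction K, h using Nat.le_induction with
  | base => simp
  | succ n hn ih =>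
    rw [sum_Ico_succ_top hn, ← ih, Nat.choose_succ_succ n t]
    push_cast
    ring

theorem choose_succ_mul_choose_le_choose_mul_choose_succ (t : ℕ) {j K : ℕ} (h : j ≤ K) :
    j.choose (t + 1) * K.choose t ≤ j.choose t * K.choose (t + 1) := by
  refine Nat.le_of_mul_le_mul_right ?_ t.succ_pos
  calc j.choose (t + 1) * K.choose t * (t + 1)
      = j.choose (t + 1) * (t + 1) * K.choose t := by ring
    _ = j.choose t * (j - t) * K.choose t := by rw [Nat.choose_succ_right_eq]
    _ ≤ j.choose t * (K - t) * K.choose t := by gcongr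
    _ = j.choose t * (K.choose (t + 1) * (t + 1)) := by rw [Nat.choose_succ_right_eq]; ring
    _ = j.choose t * K.choose (t + 1) * (t + 1) := by ring

theorem choose_succ_div_choose_succ_le_choose_div_choose {R : Type*} [Field R] [LinearOrder R]
    [IsStrictOrderedRing R] {t j K : ℕ} (hj : j ≤ K) (ht : t + 1 ≤ K) :
    (j.choose (t + 1) : R) / K.choose (t + 1) ≤ j.choose t / K.choose t := by
  have hpos : ∀ s ≤ K, (0 : R) < K.choose s := fun s hs => mod_cast Nat.choose_pos hs
  rw [div_le_div_iff₀ (hpos _ ht) (hpos _ (by omega))]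
  exact_mod_cast choose_succ_mul_choose_le_choose_mul_choose_succ t hj

theorem server_rate_monotonicity (K : ℕ) :
    (∀ t q : ℕ, t + 2 ≤ K → q ≤ K →
      ((Nat.choose K (t + 2) : ℚ) - Nat.choose (K - q) (t + 2)) / Nat.choose K (t + 1)
        ≤ ((Nat.choose K (t + 1) : ℚ) - Nat.choose (K - q) (t + 1)) / Nat.choose K t)
    ∧ (∀ t q : ℕ, t + 1 ≤ K → q + 1 ≤ K →
      ((Nat.choose K (t + 1) : ℚ) - Nat.choose (K - q) (t + 1)) / Nat.choose K t
        ≤ ((Nat.choose K (t + 1) : ℚ) - Nat.choose (K - (q + 1)) (t + 1)) / Nat.choose K t) := by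
  constructor
  · intro t q ht _
    have hqK : K - q ≤ K := Nat.sub_le K q
    rw [choose_succ_sub_choose_succ_eq_sum_Ico (t + 1) hqK,
      choose_succ_sub_choose_succ_eq_sum_Ico t hqK, sum_div, sum_div]
    exact sum_le_sum fun j hj =>
      choose_succ_div_choose_succ_le_choose_div_choose (mem_Ico.1 hj).2.le (by omega)
  · intro t q _ _
    have hle : ((K - (q + 1)).choose (t + 1) : ℚ) ≤ (K - q).choose (t + 1) :=
      mod_cast Nat.choose_le_choose (t + 1) (by omega)
    gcongr
end
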